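/- For all positive integers k, l, m, the tree G(k, l, m) has exactly klm + 2kl + k + 1 vertices and its total domination number equals 2kl + 1, i.e., γ_t(G(k,l,m)) = 2kl + 1. -/

import Mathlib

/-- A set `D` of vertices is a total dominating set if every vertex has a neighbour in `D`. -/
def IsTotalDominatingSet {V : Type*} (G : SimpleGraph V) (D : Finset V) : Prop :=
  ∀ v : V, ∃ w ∈ D, G.Adj v w

/-- The total domination number: the minimum size of a total dominating set. -/
noncomputable def totalDominationNumber {V : Type*} [Fintype V] (G : SimpleGraph V) : ℕ :=
  sInf {n | ∃ D : Finset V, IsTotalDominatingSet G D ∧ D.card = n}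

/-- The number of minimum total dominating sets. -/
noncomputable def numMinTotalDomSets {V : Type*} [Fintype V] (G : SimpleGraph V) : ℕ :=
  Set.ncard {D : Finset V | IsTotalDominatingSet G D ∧ D.card = totalDominationNumber G}

/-- The tree `G(k,l,m)`: root `y`, children `x_a` (`a : Fin k`), grandchildren `w_{a,b}`
(`b : Fin l`), each `w_{a,b}` with a single child `v_{a,b}`, each `v_{a,b}` with `m` leaves
`u_{a,b,c}` (`c : Fin m`). -/
def Gklm (k l m : ℕ) :
    SimpleGraph (Unit ⊕ (Fin k ⊕ ((Fin k × Fin l) ⊕ ((Fin k × Fin l) ⊕ (Fin k × Fin l × Fin m))))) :=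
  SimpleGraph.fromRel (fun p q =>
    (∃ a : Fin k, p = Sum.inl () ∧ q = Sum.inr (Sum.inl a)) ∨
    (∃ (a : Fin k) (b : Fin l),
      p = Sum.inr (Sum.inl a) ∧ q = Sum.inr (Sum.inr (Sum.inl (a, b)))) ∨
    (∃ (a : Fin k) (b : Fin l),
      p = Sum.inr (Sum.inr (Sum.inl (a, b))) ∧
      q = Sum.inr (Sum.inr (Sum.inr (Sum.inl (a, b))))) ∨
    (∃ (a : Fin k) (b : Fin l) (c : Fin m),
      p = Sum.inr (Sum.inr (Sum.inr (Sum.inl (a, b)))) ∧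
      q = Sum.inr (Sum.inr (Sum.inr (Sum.inr (a, b, c))))))

/-!
Upper bound: one child `x_{a₀}` of the root together with all `w_{a,b}` and `v_{a,b}` is a total
dominating set of size `2kl + 1`. Lower bound: each `v_{a,b}` is the only neighbour of its leaves,
so it lies in every total dominating set `D`; moreover the root and the `kl` vertices `v_{a,b}`
have pairwise disjoint neighbourhoods containing no `v_{a,b}`, so each of them is dominated by its
own further member of `D`.
-/

section TotalDomination

variable {V : Type*} {G : SimpleGraph V} {D : Finset V}

theorem IsTotalDominatingSet.totalDominationNumber_eq [Fintype V]
    (hD : IsTotalDominatingSet G D)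
    (hmin : ∀ D' : Finset V, IsTotalDominatingSet G D' → D.card ≤ D'.card) :
    totalDominationNumber G = D.card :=
  le_antisymm (Nat.sInf_le ⟨D, hD, rfl⟩)
    (le_csInf ⟨D.card, D, hD, rfl⟩ fun _ ⟨D', hD', hcard⟩ => hcard ▸ hmin D' hD')

theorem IsTotalDominatingSet.mem_of_forall_adj_eq (hD : IsTotalDominatingSet G D) {u v : V}
    (hu : ∀ z, G.Adj u z → z = v) : v ∈ D := by
  obtain ⟨z, hz, hadj⟩ := hD u
  exact hu z hadj ▸ hz

theorem IsTotalDominatingSet.card_add_card_le {ι κ : Type*} [Fintype ι] [Fintype κ]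
    (hD : IsTotalDominatingSet G D) (s : ι → V)
    (hs : ∀ i j z, G.Adj (s i) z → G.Adj (s j) z → i = j)
    (t : κ → V) (ht : Function.Injective t) (htD : ∀ j, t j ∈ D)
    (hst : ∀ i j, ¬ G.Adj (s i) (t j)) :
    Fintype.card ι + Fintype.card κ ≤ D.card := by
  choose f hfD hadj using fun i => hD (s i)
  let g : ι ⊕ κ → D := Sum.elim (fun i => ⟨f i, hfD i⟩) (fun j => ⟨t j, htD j⟩)
  have hg : Function.Injective g := by
    rintro (i | j) (i' | j') h <;>
      simp only [g, Sum.elim_inl, Sum.elim_inr, Subtype.mk.injEq] at h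
    · exact congrArg Sum.inl (hs i i' _ (hadj i) (h ▸ hadj i'))
    · exact (hst i j' (h ▸ hadj i)).elim
    · exact (hst i' j (h ▸ hadj i')).elim
    · exact congrArg Sum.inr (ht h)
  simpa [Fintype.card_sum] using Fintype.card_le_of_injective g hg

end TotalDomination

namespace Gklm

abbrev Vertex (k l m : ℕ) :=
  Unit ⊕ (Fin k ⊕ ((Fin k × Fin l) ⊕ ((Fin k × Fin l) ⊕ (Fin k × Fin l × Fin m))))

variable {k l m : ℕ}

def y : Vertex k l m := Sum.inl ()
def x (a : Fin k) : Vertex k l m := Sum.inr (Sum.inl a)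
def w (p : Fin k × Fin l) : Vertex k l m := Sum.inr (Sum.inr (Sum.inl p))
def v (p : Fin k × Fin l) : Vertex k l m := Sum.inr (Sum.inr (Sum.inr (Sum.inl p)))
def u (q : Fin k × Fin l × Fin m) : Vertex k l m := Sum.inr (Sum.inr (Sum.inr (Sum.inr q)))

theorem adj_y (z : Vertex k l m) : (Gklm k l m).Adj y z ↔ ∃ a, z = x a := by
  simp only [Gklm, SimpleGraph.fromRel_adj, y, x]; aesop

theorem adj_x (a : Fin k) (z : Vertex k l m) :
    (Gklm k l m).Adj (x a) z ↔ z = y ∨ ∃ b, z = w (a, b) := by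
  simp only [Gklm, SimpleGraph.fromRel_adj, y, x, w]; aesop

theorem adj_w (p : Fin k × Fin l) (z : Vertex k l m) :
    (Gklm k l m).Adj (w p) z ↔ z = x p.1 ∨ z = v p := by
  simp only [Gklm, SimpleGraph.fromRel_adj, x, w, v]; aesop

theorem adj_v (p : Fin k × Fin l) (z : Vertex k l m) :
    (Gklm k l m).Adj (v p) z ↔ z = w p ∨ ∃ c, z = u (p.1, p.2, c) := by
  simp only [Gklm, SimpleGraph.fromRel_adj, w, v, u]; aesop

theorem adj_u (q : Fin k × Fin l × Fin m) (z : Vertex k l m) :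
    (Gklm k l m).Adj (u q) z ↔ z = v (q.1, q.2.1) := by
  simp only [Gklm, SimpleGraph.fromRel_adj, v, u]; aesop

/-- `{x_{a₀}} ∪ {w_{a,b}} ∪ {v_{a,b}}`, given summand by summand of the vertex type. -/
def minTotalDominatingSet (a₀ : Fin k) : Finset (Vertex k l m) :=
  (∅ : Finset Unit).disjSum
    (({a₀} : Finset (Fin k)).disjSum (Finset.univ.disjSum (Finset.univ.disjSum ∅)))

theorem card_minTotalDominatingSet (a₀ : Fin k) :
    (minTotalDominatingSet (l := l) (m := m) a₀).card = 2 * (k * l) + 1 := by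
  simp only [minTotalDominatingSet, Finset.card_disjSum, Finset.card_univ, Fintype.card_prod,
    Fintype.card_fin, Finset.card_empty, Finset.card_singleton]
  ring

theorem isTotalDominatingSet_minTotalDominatingSet (hl : 0 < l) (a₀ : Fin k) :
    IsTotalDominatingSet (Gklm k l m) (minTotalDominatingSet a₀) := by
  rintro (_ | a | p | p | q)
  · exact ⟨x a₀, by simp [minTotalDominatingSet, x], (adj_y _).2 ⟨a₀, rfl⟩⟩
  · exact ⟨w (a, ⟨0, hl⟩), by simp [minTotalDominatingSet, w],
      (adj_x a _).2 (Or.inr ⟨_, rfl⟩)⟩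
  · exact ⟨v p, by simp [minTotalDominatingSet, v], (adj_w p _).2 (Or.inr rfl)⟩
  · exact ⟨w p, by simp [minTotalDominatingSet, w], (adj_v p _).2 (Or.inl rfl)⟩
  · exact ⟨v (q.1, q.2.1), by simp [minTotalDominatingSet, v], (adj_u q _).2 rfl⟩

theorem card_le_of_isTotalDominatingSet (hm : 0 < m) {D : Finset (Vertex k l m)}
    (hD : IsTotalDominatingSet (Gklm k l m) D) : 2 * (k * l) + 1 ≤ D.card := by
  let s : Option (Fin k × Fin l) → Vertex k l m := fun i => i.elim y v
  have hs : ∀ i j z, (Gklm k l m).Adj (s i) z → (Gklm k l m).Adj (s j) z → i = j := by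
    rintro (_ | p) (_ | q) z hi hj
    · rfl
    all_goals
      simp only [s, Option.elim, adj_y, adj_v] at hi hj
      aesop (add simp [x, w, u])
  have hst : ∀ i q, ¬ (Gklm k l m).Adj (s i) (v q) := by
    rintro (_ | p) q h <;> simp only [s, Option.elim, adj_y, adj_v] at h <;> simp [x, w, v, u] at h
  have hv_inj : Function.Injective (v : Fin k × Fin l → Vertex k l m) := fun _ _ h => by
    simpa [v] using h
  have hvD : ∀ p, v p ∈ D := fun p =>
    hD.mem_of_forall_adj_eq (u := u (p.1, p.2, ⟨0, hm⟩)) fun z hz => (adj_u _ z).1 hz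
  have := hD.card_add_card_le s hs v hv_inj hvD hst
  simp only [Fintype.card_option, Fintype.card_prod, Fintype.card_fin] at this
  omega

end Gklm

theorem Gklm_card_and_totalDominationNumber (k l m : ℕ)
    (hk : 0 < k) (hl : 0 < l) (hm : 0 < m) :
    Fintype.card
        (Unit ⊕ (Fin k ⊕ ((Fin k × Fin l) ⊕ ((Fin k × Fin l) ⊕ (Fin k × Fin l × Fin m)))))
      = k * l * m + 2 * (k * l) + k + 1 ∧
    totalDominationNumber (Gklm k l m) = 2 * (k * l) + 1 := by
  refine ⟨by simp only [Fintype.card_sum, Fintype.card_prod, Fintype.card_fin,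
    Fintype.card_unit]; ring, ?_⟩
  have hD := Gklm.isTotalDominatingSet_minTotalDominatingSet (m := m) hl ⟨0, hk⟩
  rw [hD.totalDominationNumber_eq fun D' hD' => ?_, Gklm.card_minTotalDominatingSet]
  rw [Gklm.card_minTotalDominatingSet]
  exact Gklm.card_le_of_isTotalDominatingSet hm hD'
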